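/- For positive semidefinite matrices A, B ∈ ℝ^{n×n}, the Hadamard product satisfies λ_max(A ∘ B) ≤ (max_i A_{ii}) λ_max(B) and λ_min(A ∘ B) ≥ (min_i A_{ii}) λ_min(B). -/

import Mathlib

/-!
In the Loewner order, the eigenvalue bounds on `B` say `sB • 1 ≤ B ≤ lB • 1`. By the Schur
product theorem, Hadamard multiplication by the positive semidefinite `A` is monotone, and it
sends `c • 1` to `c • diagonal A.diag`; hence
`sB • diagonal A.diag ≤ A ⊙ B ≤ lB • diagonal A.diag`. Since `0 ≤ sB ≤ lB`, the diagonal of `A`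
may then be replaced by `dmin • 1` and `dmax • 1`.
-/

open Matrix

/-- μ is an eigenvalue of the square matrix M. -/
def HasEigen {n : ℕ} (M : Matrix (Fin n) (Fin n) ℝ) (μ : ℝ) : Prop :=
  ∃ v : Fin n → ℝ, v ≠ 0 ∧ M.mulVec v = μ • v

open scoped MatrixOrder ComplexOrder

section LoewnerHadamard

variable {ι 𝕜 : Type*} [DecidableEq ι] [RCLike 𝕜] {A B : Matrix ι ι 𝕜} {c : ℝ}

theorem Matrix.hadamard_smul_one_sub (A B : Matrix ι ι 𝕜) (c : ℝ) :
    A ⊙ (c • 1 - B) = c • diagonal A.diag - A ⊙ B := by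
  ext i j; by_cases h : i = j <;> simp [h, hadamard_apply, mul_sub]

theorem Matrix.hadamard_sub_smul_one (A B : Matrix ι ι 𝕜) (c : ℝ) :
    A ⊙ (B - c • 1) = A ⊙ B - c • diagonal A.diag := by
  ext i j; by_cases h : i = j <;> simp [h, hadamard_apply, mul_sub]

theorem Matrix.PosSemidef.hadamard_le_smul_diagonal (hA : A.PosSemidef) (hB : B ≤ c • 1) :
    A ⊙ B ≤ c • diagonal A.diag := by
  rw [le_iff, ← hadamard_smul_one_sub]
  exact hA.hadamard hB

theorem Matrix.PosSemidef.smul_diagonal_le_hadamard (hA : A.PosSemidef) (hB : c • 1 ≤ B) :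
    c • diagonal A.diag ≤ A ⊙ B := by
  rw [le_iff, ← hadamard_sub_smul_one]
  exact hA.hadamard hB

theorem Matrix.diagonal_le_smul_one {d : ι → 𝕜} {c : 𝕜} (h : ∀ i, d i ≤ c) :
    diagonal d ≤ c • 1 := by
  rw [le_iff, smul_one_eq_diagonal, diagonal_sub, posSemidef_diagonal_iff]
  exact fun i => sub_nonneg.2 (h i)

theorem Matrix.smul_one_le_diagonal {d : ι → 𝕜} {c : 𝕜} (h : ∀ i, c ≤ d i) :
    c • 1 ≤ diagonal d := by
  rw [le_iff, smul_one_eq_diagonal, diagonal_sub, posSemidef_diagonal_iff]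
  exact fun i => sub_nonneg.2 (h i)

end LoewnerHadamard

namespace HasEigen

variable {n : ℕ} {M : Matrix (Fin n) (Fin n) ℝ} {μ : ℝ}

theorem nonneg_of_posSemidef (h : HasEigen M μ) (hM : M.PosSemidef) : 0 ≤ μ := by
  obtain ⟨v, hv, hMv⟩ := h
  have := hM.dotProduct_mulVec_nonneg v
  simp only [star_trivial, hMv, dotProduct_smul, smul_eq_mul] at this
  exact nonneg_of_mul_nonneg_left this (dotProduct_self_star_pos_iff.mpr hv)

theorem smul_one_sub (h : HasEigen M μ) (c : ℝ) : HasEigen (c • 1 - M) (c - μ) := by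
  obtain ⟨v, hv, hMv⟩ := h
  exact ⟨v, hv, by rw [sub_mulVec, smul_mulVec, one_mulVec, hMv, sub_smul]⟩

theorem sub_smul_one (h : HasEigen M μ) (c : ℝ) : HasEigen (M - c • 1) (μ - c) := by
  obtain ⟨v, hv, hMv⟩ := h
  exact ⟨v, hv, by rw [sub_mulVec, smul_mulVec, one_mulVec, hMv, sub_smul]⟩

theorem le_of_le_smul_one (h : HasEigen M μ) {c : ℝ} (hM : M ≤ c • 1) : μ ≤ c :=
  sub_nonneg.1 ((h.smul_one_sub c).nonneg_of_posSemidef hM)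

theorem ge_of_smul_one_le (h : HasEigen M μ) {c : ℝ} (hM : c • 1 ≤ M) : c ≤ μ :=
  sub_nonneg.1 ((h.sub_smul_one c).nonneg_of_posSemidef hM)

end HasEigen

section

variable {n : ℕ} {M : Matrix (Fin n) (Fin n) ℝ}

theorem Matrix.IsHermitian.hasEigen_eigenvalues (hM : M.IsHermitian) (i : Fin n) :
    HasEigen M (hM.eigenvalues i) := by
  refine ⟨hM.eigenvectorBasis i, fun h => ?_, hM.mulVec_eigenvectorBasis i⟩
  exact hM.eigenvectorBasis.orthonormal.ne_zero i (by simpa using congrArg (WithLp.toLp 2) h)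

theorem Matrix.IsHermitian.le_smul_one_of_forall_hasEigen_le (hM : M.IsHermitian) {c : ℝ}
    (h : ∀ μ, HasEigen M μ → μ ≤ c) : M ≤ c • 1 := by
  have hH : (c • 1 - M).IsHermitian := (isHermitian_one.smul (IsSelfAdjoint.all c)).sub hM
  refine hH.posSemidef_iff_eigenvalues_nonneg.2 (Pi.le_def.2 fun i => ?_)
  have hμ := h _ (by simpa using (hH.hasEigen_eigenvalues i).smul_one_sub c)
  exact (sub_le_self_iff c).1 hμ

theorem Matrix.IsHermitian.smul_one_le_of_forall_le_hasEigen (hM : M.IsHermitian) {c : ℝ}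
    (h : ∀ μ, HasEigen M μ → c ≤ μ) : c • 1 ≤ M := by
  have hH : (M - c • 1).IsHermitian := hM.sub (isHermitian_one.smul (IsSelfAdjoint.all c))
  refine hH.posSemidef_iff_eigenvalues_nonneg.2 (Pi.le_def.2 fun i => ?_)
  have hμ := h _ (by simpa using (hH.hasEigen_eigenvalues i).sub_smul_one (-c))
  exact (le_add_iff_nonneg_left c).1 hμ

end

theorem stmt10 {n : ℕ} (A B : Matrix (Fin n) (Fin n) ℝ)
    (hA : A.PosSemidef) (hB : B.PosSemidef)
    (lB : ℝ) (hlB : HasEigen B lB ∧ ∀ μ, HasEigen B μ → μ ≤ lB)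
    (sB : ℝ) (hsB : HasEigen B sB ∧ ∀ μ, HasEigen B μ → sB ≤ μ)
    (dmax : ℝ) (hdmax : (∀ i, A i i ≤ dmax) ∧ ∃ i, A i i = dmax)
    (dmin : ℝ) (hdmin : (∀ i, dmin ≤ A i i) ∧ ∃ i, A i i = dmin) :
    ∀ μ : ℝ, HasEigen (Matrix.hadamard A B) μ → μ ≤ dmax * lB ∧ dmin * sB ≤ μ := by
  intro μ hμ
  have hB_le : B ≤ lB • 1 := hB.isHermitian.le_smul_one_of_forall_hasEigen_le hlB.2
  have hB_ge : sB • 1 ≤ B := hB.isHermitian.smul_one_le_of_forall_le_hasEigen hsB.2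
  constructor
  · refine hμ.le_of_le_smul_one ?_
    calc A ⊙ B ≤ lB • diagonal A.diag := hA.hadamard_le_smul_diagonal hB_le
      _ ≤ lB • (dmax • 1) :=
        smul_le_smul_of_nonneg_left (diagonal_le_smul_one hdmax.1) (hlB.1.nonneg_of_posSemidef hB)
      _ = (dmax * lB) • 1 := by rw [smul_smul, mul_comm]
  · refine hμ.ge_of_smul_one_le ?_
    calc (dmin * sB) • (1 : Matrix (Fin n) (Fin n) ℝ) = sB • (dmin • 1) := by
          rw [smul_smul, mul_comm]
      _ ≤ sB • diagonal A.diag :=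
        smul_le_smul_of_nonneg_left (smul_one_le_diagonal hdmin.1) (hsB.1.nonneg_of_posSemidef hB)
      _ ≤ A ⊙ B := hA.smul_diagonal_le_hadamard hB_ge
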